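/- If each player's weight is the same across all resources (w_{j,k} = w_j for all k), then the PPA-Game admits a pure Nash equilibrium; moreover, every improvement path is finite. -/

import Mathlib

open Finset

/-- Total weight on resource `k` under profile `π`. -/
noncomputable def Wt {N K : ℕ} (w : Fin N → Fin K → ℝ) (π : Fin N → Fin K) (k : Fin K) : ℝ :=
  ∑ j : Fin N, if π j = k then w j k else 0

/-- Utility of player `j` in the PPA-Game. -/
noncomputable def U {N K : ℕ} (μ : Fin K → ℝ) (w : Fin N → Fin K → ℝ)
    (π : Fin N → Fin K) (j : Fin N) : ℝ :=
  if 0 < Wt w π (π j) then μ (π j) * w j (π j) / Wt w π (π j) else 0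

/-- Pure Nash equilibrium of the PPA-Game. -/
def IsPNE {N K : ℕ} (μ : Fin K → ℝ) (w : Fin N → Fin K → ℝ) (π : Fin N → Fin K) : Prop :=
  ∀ j : Fin N, ∀ k' : Fin K, U μ w (Function.update π j k') j ≤ U μ w π j

/-- A unilateral deviation by one player that strictly increases that player's utility. -/
def ImprovementStep {N K : ℕ} (μ : Fin K → ℝ) (w : Fin N → Fin K → ℝ)
    (π π' : Fin N → Fin K) : Prop :=
  ∃ (j : Fin N) (k' : Fin K), π' = Function.update π j k' ∧ U μ w π' j > U μ w π j

/-!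
With player weights independent of the resource, player `j` on resource `k` receives
`w_j / L_k`, where `L_k = W_k / μ_k` is the load of `k` (total weight over payoff). Hence an
improvement step of `j` from `k` to `k'` makes the new load of `k'` smaller than the old load
of `k`, while the load of `k` itself drops and all other loads stay put. So the multiset of
loads strictly decreases in the Dershowitz–Manna order. That order is transitive and
irreflexive, so on the finite set of profiles improvement steps are well founded: there is
no infinite improvement path, and a minimal profile admits no improvement step, i.e. is a
pure Nash equilibrium.
-/

namespace Multiset

variable {α ι : Type*} [Preorder α]

theorem isDershowitzMannaLT_irrefl (M : Multiset α) : ¬ IsDershowitzMannaLT M M := by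
  classical
  rintro ⟨X, Y, Z, hZ, hY, hZ', hYZ⟩
  obtain rfl : Y = Z := add_left_cancel (hY.symm.trans hZ')
  obtain ⟨m, hm⟩ := Y.toFinset.exists_maximal (toFinset_nonempty.mpr hZ)
  obtain ⟨z, hz, hmz⟩ := hYZ m (mem_toFinset.mp hm.prop)
  exact hm.not_gt (mem_toFinset.mpr hz) hmz

theorem isDershowitzMannaLT_map_of_changed_lt {s : Multiset ι} {f g : ι → α} {i₀ : ι}
    (hi₀ : i₀ ∈ s) (hfg : g i₀ ≠ f i₀) (hlt : ∀ i ∈ s, g i ≠ f i → g i < f i₀) :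
    IsDershowitzMannaLT (s.map g) (s.map f) := by
  classical
  let unchanged := s.filter (fun i => g i = f i)
  let changed := s.filter (fun i => g i ≠ f i)
  refine ⟨unchanged.map f, changed.map g, changed.map f, ?_, ?_, ?_, ?_⟩
  · simpa [changed, eq_zero_iff_forall_notMem] using ⟨i₀, hi₀, hfg⟩
  · rw [← filter_add_not (fun i => g i = f i) s, map_add]
    congr 1
    exact map_congr rfl fun i hi => (mem_filter.mp hi).2
  · rw [← filter_add_not (fun i => g i = f i) s, map_add]
  · simp only [changed, mem_map, mem_filter]
    rintro _ ⟨i, ⟨hi, hne⟩, rfl⟩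
    exact ⟨f i₀, ⟨i₀, ⟨hi₀, hfg⟩, rfl⟩, hlt i hi hne⟩

end Multiset

section

variable {N K : ℕ} (μ : Fin K → ℝ) (w : Fin N → Fin K → ℝ)

noncomputable def load (π : Fin N → Fin K) (k : Fin K) : ℝ := Wt w π k / μ k

noncomputable def loads (π : Fin N → Fin K) : Multiset ℝ := univ.val.map (load μ w π)

theorem Wt_update (π : Fin N → Fin K) (j : Fin N) (k' m : Fin K) :
    Wt w (Function.update π j k') m
      = Wt w π m + (if k' = m then w j m else 0) - (if π j = m then w j m else 0) := by
  unfold Wt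
  rw [← add_sum_erase _ _ (mem_univ j), ← add_sum_erase _ _ (mem_univ j),
    sum_congr rfl fun i hi => by rw [Function.update_of_ne (ne_of_mem_erase hi)],
    Function.update_self]
  ring

variable {w}

theorem Wt_nonneg (hw : ∀ j k, 0 ≤ w j k) (π : Fin N → Fin K) (k : Fin K) : 0 ≤ Wt w π k :=
  sum_nonneg fun j _ => by split_ifs <;> simp [hw]

theorem weight_le_Wt (hw : ∀ j k, 0 ≤ w j k) (π : Fin N → Fin K) (j : Fin N) :
    w j (π j) ≤ Wt w π (π j) := by
  simpa [Wt] using single_le_sum (f := fun i => if π i = π j then w i (π j) else 0)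
    (fun i _ => by split_ifs <;> simp [hw]) (mem_univ j)

-- When the load is zero both sides vanish, by the conventions of `U` and of `x / 0 = 0`.
theorem U_eq_div_load (hw : ∀ j k, 0 ≤ w j k) (π : Fin N → Fin K) (j : Fin N) :
    U μ w π j = w j (π j) / load μ w π (π j) := by
  unfold U load
  split_ifs with h
  · rw [div_div_eq_mul_div, mul_comm]
  · simp [le_antisymm (not_lt.mp h) (Wt_nonneg hw π (π j))]

theorem load_lt_of_improvementStep (hμ : ∀ k, 0 < μ k) (hw : ∀ j k, 0 ≤ w j k)
    (hhom : ∀ (j : Fin N) (k k' : Fin K), w j k = w j k') {π π' : Fin N → Fin K}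
    (h : ImprovementStep μ w π π') :
    ∃ k, load μ w π' k < load μ w π k ∧
      ∀ m, load μ w π' m ≠ load μ w π m → load μ w π' m < load μ w π k := by
  obtain ⟨j, k', rfl, himp⟩ := h
  obtain ⟨k, hk⟩ : ∃ k, π j = k := ⟨_, rfl⟩
  rw [U_eq_div_load μ hw, U_eq_div_load μ hw, Function.update_self, hk, hhom j k' k] at himp
  have hwj : 0 < w j k := (hw j k).lt_of_ne fun h0 => by simp [← h0] at himp
  have hk' : k' ≠ k := by
    rintro rfl
    simp [← hk] at himp
  have hL : 0 < load μ w π k := div_pos (hwj.trans_le (hk ▸ weight_le_Wt hw π j)) (hμ k)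
  have hmove : load μ w (Function.update π j k') k' < load μ w π k := by
    by_contra! hle
    linarith [div_le_div_of_nonneg_left hwj.le hL hle]
  have hleave : load μ w (Function.update π j k') k < load μ w π k := by
    unfold load
    rw [Wt_update, hk, if_neg hk', if_pos rfl, add_zero]
    exact div_lt_div_of_pos_right (by linarith) (hμ k)
  have hother : ∀ m, m ≠ k → m ≠ k' → load μ w (Function.update π j k') m = load μ w π m := by
    intro m hmk hmk'
    unfold load
    rw [Wt_update]
    simp [hk, Ne.symm hmk, hmk'.symm]
  refine ⟨k, hleave, fun m hm => ?_⟩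
  by_cases hmk : m = k
  · exact hmk ▸ hleave
  by_cases hmk' : m = k'
  · exact hmk' ▸ hmove
  exact absurd (hother m hmk hmk') hm

theorem isDershowitzMannaLT_loads_of_improvementStep (hμ : ∀ k, 0 < μ k)
    (hw : ∀ j k, 0 ≤ w j k) (hhom : ∀ (j : Fin N) (k k' : Fin K), w j k = w j k')
    {π π' : Fin N → Fin K} (h : ImprovementStep μ w π π') :
    (loads μ w π').IsDershowitzMannaLT (loads μ w π) := by
  obtain ⟨k, hk, hlt⟩ := load_lt_of_improvementStep μ hμ hw hhom h
  exact Multiset.isDershowitzMannaLT_map_of_changed_lt (mem_univ_val k) hk.ne fun m _ => hlt m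

theorem wellFounded_flip_improvementStep (hμ : ∀ k, 0 < μ k) (hw : ∀ j k, 0 ≤ w j k)
    (hhom : ∀ (j : Fin N) (k k' : Fin K), w j k = w j k') :
    WellFounded (flip (ImprovementStep μ w)) :=
  let r : (Fin N → Fin K) → (Fin N → Fin K) → Prop :=
    fun π' π => (loads μ w π').IsDershowitzMannaLT (loads μ w π)
  haveI : IsTrans _ r := ⟨fun _ _ _ => Multiset.IsDershowitzMannaLT.trans⟩
  haveI : Std.Irrefl r := ⟨fun _ => Multiset.isDershowitzMannaLT_irrefl _⟩
  Subrelation.wf (isDershowitzMannaLT_loads_of_improvementStep μ hμ hw hhom)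
    (Finite.wellFounded_of_trans_of_irrefl r)

theorem isPNE_iff_forall_not_improvementStep (π : Fin N → Fin K) :
    IsPNE μ w π ↔ ∀ π', ¬ ImprovementStep μ w π π' := by
  constructor
  · rintro h π' ⟨j, k', rfl, hlt⟩
    exact (h j k').not_gt hlt
  · exact fun h j k' => not_lt.mp fun hlt => h _ ⟨j, k', rfl, hlt⟩

end

theorem stmt4_general {N K : ℕ} (hK : 2 ≤ K)
    (μ : Fin K → ℝ) (w : Fin N → Fin K → ℝ)
    (hμ : ∀ k, 0 < μ k ∧ μ k ≤ 1) (hw : ∀ j k, 0 ≤ w j k ∧ w j k ≤ 1)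
    (hhom : ∀ (j : Fin N) (k k' : Fin K), w j k = w j k') :
    (∃ π : Fin N → Fin K, IsPNE μ w π) ∧
      ¬ ∃ ℓ : ℕ → (Fin N → Fin K), ∀ t : ℕ, ImprovementStep μ w (ℓ t) (ℓ (t + 1)) := by
  have wf := wellFounded_flip_improvementStep μ (fun k => (hμ k).1) (fun j k => (hw j k).1) hhom
  constructor
  · have : Nonempty (Fin K) := ⟨⟨0, by omega⟩⟩
    obtain ⟨π, -, hmin⟩ := wf.has_min Set.univ Set.univ_nonempty
    exact ⟨π, (isPNE_iff_forall_not_improvementStep μ π).mpr fun π' h => hmin π' trivial h⟩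
  · exact fun ⟨ℓ, hℓ⟩ => (wellFounded_iff_isEmpty_descending_chain.mp wf).false ⟨ℓ, hℓ⟩

/-- if each player's weight is the same across resources, the PPA-Game
admits a PNE; moreover every improvement path is finite (no infinite improvement path). -/
theorem stmt4 {N K : ℕ} (hN : 2 ≤ N) (hK : 2 ≤ K)
    (μ : Fin K → ℝ) (w : Fin N → Fin K → ℝ)
    (hμ : ∀ k, 0 < μ k ∧ μ k ≤ 1) (hw : ∀ j k, 0 ≤ w j k ∧ w j k ≤ 1)
    (hhom : ∀ (j : Fin N) (k k' : Fin K), w j k = w j k') :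
    (∃ π : Fin N → Fin K, IsPNE μ w π) ∧
      ¬ ∃ ℓ : ℕ → (Fin N → Fin K), ∀ t : ℕ, ImprovementStep μ w (ℓ t) (ℓ (t + 1)) :=
  stmt4_general hK μ w hμ hw hhom
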